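/- arXiv:math/0311269 — 4 statements merged into one kernel-verified Lean document; each statement's English description precedes it below -/
import Mathlib

section
/- Let g : ℝ → [0,∞) be a function of class MK, i.e., g is continuous, g(0) = 0, g is even, and g is strictly increasing on [0,∞). Let φ : [0,∞) → ℝ be differentiable with Lipschitz continuous derivative φ', and assume ∫₀^∞ g(φ(s)) ds < ∞. Then φ(s) → 0 and φ'(s) → 0 as s → ∞. -/
/-!
Because `φ'` is `K`-Lipschitz, `φ` stays within `K (s - t)²` of its tangent line at `t`.
Walking from `t` in the direction in which the tangent line does not decrease `|φ|`, one finds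
an interval of fixed length `δ` next to `t` on which `|φ| ≥ |φ t| - K δ²`. Hence if `|φ| ≥ ε`
at arbitrarily late times, the integral of `g ∘ φ` collects a fixed positive amount arbitrarily
far out, which is impossible for a finite integral. Once `φ → 0`, the same Taylor bound gives
`δ |φ' t| ≤ |φ (t + δ)| + |φ t| + K δ²`, so `φ' → 0` as well.
-/

open MeasureTheory Set Filter Topology
open scoped ENNReal NNReal

theorem norm_image_sub_sub_smul_le_of_lipschitzOnWith {E : Type*} [NormedAddCommGroup E]
    [NormedSpace ℝ E] {f f' : ℝ → E} {s : Set ℝ} {K : ℝ≥0} (hs : Convex ℝ s)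
    (hf : ∀ x ∈ s, HasDerivWithinAt f (f' x) s x) (hf' : LipschitzOnWith K f' s)
    {x y : ℝ} (hx : x ∈ s) (hy : y ∈ s) :
    ‖f y - f x - (y - x) • f' x‖ ≤ K * (y - x) ^ 2 := by
  have hseg : uIcc x y ⊆ s := hs.ordConnected.uIcc_subset hx hy
  have hderiv : ∀ z ∈ uIcc x y, HasDerivWithinAt (fun z => f z - (z - x) • f' x)
      (f' z - f' x) (uIcc x y) z := fun z hz => by
    have := ((hf z (hseg hz)).mono hseg).sub
      (((hasDerivWithinAt_id z _).sub_const x).smul_const (f' x))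
    rwa [one_smul] at this
  have hbound : ∀ z ∈ uIcc x y, ‖f' z - f' x‖ ≤ K * |y - x| := fun z hz =>
    (hf'.norm_sub_le (hseg hz) hx).trans
      (mul_le_mul_of_nonneg_left (abs_sub_left_of_mem_uIcc hz) K.coe_nonneg)
  have := (convex_uIcc x y).norm_image_sub_le_of_norm_hasDerivWithin_le hderiv hbound
    left_mem_uIcc right_mem_uIcc
  rwa [sub_self, zero_smul, sub_zero, sub_right_comm, Real.norm_eq_abs, mul_assoc,
    abs_mul_abs_self, ← sq] at this

theorem tendsto_setLIntegral_Ioi_atTop_zero {F : ℝ → ℝ≥0∞} {a : ℝ}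
    (hF : ∫⁻ x in Ioi a, F x ≠ ∞) :
    Tendsto (fun T => ∫⁻ x in Ioi T, F x) atTop (𝓝 0) := by
  set ν := (volume.restrict (Ioi a)).withDensity F
  have hν : ∀ T, a ≤ T → ν (Ioi T) = ∫⁻ x in Ioi T, F x := fun T hT => by
    rw [withDensity_apply', Measure.restrict_restrict measurableSet_Ioi, Ioi_inter_Ioi,
      sup_eq_left.2 hT]
  have hlim : Tendsto (ν ∘ Ioi) atTop (𝓝 (ν (⋂ T, Ioi T))) :=
    tendsto_measure_iInter_atTop (fun _ => measurableSet_Ioi.nullMeasurableSet)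
      (fun _ _ h => Ioi_subset_Ioi h) ⟨a, by rwa [hν a le_rfl]⟩
  have hempty : ⋂ T : ℝ, Ioi T = ∅ := iInter_eq_empty_iff.2 fun x => ⟨x, lt_irrefl x⟩
  rw [hempty, measure_empty] at hlim
  exact hlim.congr' (eventually_atTop.2 ⟨a, fun T hT => hν T hT⟩)

theorem tendsto_zero_of_lipschitz_deriv_of_tendsto_zero {E : Type*} [NormedAddCommGroup E]
    [NormedSpace ℝ E] {f f' : ℝ → E} {a : ℝ} {K : ℝ≥0}
    (hf : ∀ x ∈ Ici a, HasDerivWithinAt f (f' x) (Ici a) x) (hf' : LipschitzOnWith K f' (Ici a))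
    (hf0 : Tendsto f atTop (𝓝 0)) : Tendsto f' atTop (𝓝 0) := by
  rw [Metric.tendsto_nhds]
  intro ε hε
  set δ := ε / (2 * (K + 1))
  have hδ : 0 < δ := by positivity
  have hKδ : K * δ < ε / 2 := by
    have : (K + 1) * δ = ε / 2 := by simp only [δ]; field_simp
    linarith
  have hsmall : ∀ᶠ t in atTop, ‖f t‖ < ε * δ / 4 :=
    (tendsto_zero_iff_norm_tendsto_zero.1 hf0).eventually (gt_mem_nhds (by positivity))
  have hshift := tendsto_atTop_add_const_right atTop δ (f := fun t => t) tendsto_id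
  filter_upwards [hsmall, hshift.eventually hsmall, eventually_ge_atTop a] with t ht htδ hat
  rw [dist_zero_right]
  have htaylor := norm_image_sub_sub_smul_le_of_lipschitzOnWith (convex_Ici a) hf hf'
    (mem_Ici.2 hat) (mem_Ici.2 (show a ≤ t + δ by linarith))
  rw [add_sub_cancel_left] at htaylor
  have hincr : δ * ‖f' t‖ ≤ ‖f (t + δ)‖ + ‖f t‖ + K * δ ^ 2 := by
    calc δ * ‖f' t‖ = ‖f (t + δ) - f t - (f (t + δ) - f t - δ • f' t)‖ := by
          rw [sub_sub_cancel, norm_smul, Real.norm_of_nonneg hδ.le]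
      _ ≤ ‖f (t + δ)‖ + ‖f t‖ + ‖f (t + δ) - f t - δ • f' t‖ :=
          (norm_sub_le _ _).trans (by gcongr; exact norm_sub_le _ _)
      _ ≤ _ := by gcongr
  have hquad : K * δ ^ 2 < ε / 2 * δ := by
    rw [sq, ← mul_assoc]
    exact mul_lt_mul_of_pos_right hKδ hδ
  by_contra! hbig
  linarith [mul_le_mul_of_nonneg_left hbig hδ.le]

section Real

variable {f f' : ℝ → ℝ} {a : ℝ} {K : ℝ≥0}

theorem exists_Icc_abs_image_ge_of_lipschitzOnWith
    (hf : ∀ x ∈ Ici a, HasDerivWithinAt f (f' x) (Ici a) x) (hf' : LipschitzOnWith K f' (Ici a))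
    {t δ : ℝ} (hδ : 0 ≤ δ) (ht : a + δ ≤ t) :
    ∃ b ∈ Icc (t - δ) t, ∀ s ∈ Icc b (b + δ), |f t| - K * δ ^ 2 ≤ |f s| := by
  have hside : ∀ s ∈ Icc (t - δ) (t + δ), 0 ≤ f t * f' t * (s - t) →
      |f t| - K * δ ^ 2 ≤ |f s| := by
    intro s hs hsign
    have htaylor := norm_image_sub_sub_smul_le_of_lipschitzOnWith (convex_Ici a) hf hf'
      (mem_Ici.2 (show a ≤ t by linarith)) (mem_Ici.2 (show a ≤ s by linarith [hs.1]))
    rw [Real.norm_eq_abs, smul_eq_mul] at htaylor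
    have hlinear : |f t| ≤ |f t + (s - t) * f' t| := sq_le_sq.1 (by nlinarith)
    have hsq : K * (s - t) ^ 2 ≤ K * δ ^ 2 :=
      mul_le_mul_of_nonneg_left (sq_le_sq' (by linarith [hs.1]) (by linarith [hs.2]))
        K.coe_nonneg
    have := abs_sub_abs_le_abs_sub (f t + (s - t) * f' t) (f s)
    rw [abs_sub_comm, ← sub_sub] at this
    linarith
  rcases le_total 0 (f t * f' t) with hpos | hneg
  · refine ⟨t, ⟨by linarith, le_rfl⟩, fun s hs => hside s ⟨by linarith [hs.1], hs.2⟩ ?_⟩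
    exact mul_nonneg hpos (sub_nonneg.2 hs.1)
  · refine ⟨t - δ, ⟨le_rfl, by linarith⟩, fun s hs => hside s ⟨hs.1, by linarith [hs.2]⟩ ?_⟩
    exact mul_nonneg_of_nonpos_of_nonpos hneg (by linarith [hs.2])

theorem tendsto_zero_of_lipschitz_deriv_of_lintegral_ne_top
    (hf : ∀ x ∈ Ici a, HasDerivWithinAt f (f' x) (Ici a) x) (hf' : LipschitzOnWith K f' (Ici a))
    {G : ℝ → ℝ≥0∞} (hG : ∀ ε > 0, ∃ c ≠ 0, ∀ x, ε ≤ |x| → c ≤ G x)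
    (hint : ∫⁻ s in Ioi a, G (f s) ≠ ∞) : Tendsto f atTop (𝓝 0) := by
  rw [Metric.tendsto_nhds]
  intro ε hε
  by_contra hfreq
  rw [not_eventually] at hfreq
  obtain ⟨c, hc, hcG⟩ := hG (ε / 2) (by positivity)
  set δ := min 1 (ε / (2 * (K + 1)))
  have hδ : 0 < δ := lt_min one_pos (by positivity)
  have hKδ : K * δ ^ 2 ≤ ε / 2 := by
    have h1 : δ ^ 2 ≤ δ := by nlinarith [min_le_left 1 (ε / (2 * (K + 1)))]
    have h2 : (K + 1) * δ ≤ ε / 2 := by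
      rw [← le_div_iff₀' (by positivity), div_div]
      exact min_le_right _ _
    nlinarith [K.coe_nonneg]
  have hmass : 0 < c * ENNReal.ofReal δ :=
    ENNReal.mul_pos hc (ENNReal.ofReal_pos.2 hδ).ne'
  have hshift := tendsto_atTop_add_const_right atTop (-δ) (f := fun t => t) tendsto_id
  have htail :=
    ((tendsto_setLIntegral_Ioi_atTop_zero hint).comp hshift).eventually (gt_mem_nhds hmass)
  obtain ⟨t, hft, hsmall, hat⟩ :=
    (hfreq.and_eventually (htail.and (eventually_ge_atTop (a + δ)))).exists
  rw [Real.dist_eq, sub_zero, not_lt] at hft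
  obtain ⟨b, hb, hbf⟩ := exists_Icc_abs_image_ge_of_lipschitzOnWith hf hf' hδ.le hat
  refine hsmall.not_ge ?_
  calc c * ENNReal.ofReal δ = ∫⁻ _ in Ioc b (b + δ), c := by
        rw [setLIntegral_const, Real.volume_Ioc, add_sub_cancel_left, mul_comm]
    _ ≤ ∫⁻ s in Ioc b (b + δ), G (f s) := setLIntegral_mono' measurableSet_Ioc fun s hs =>
        hcG _ (by linarith [hbf s (Ioc_subset_Icc_self hs)])
    _ ≤ ∫⁻ s in Ioi (t + -δ), G (f s) :=
        lintegral_mono_set fun s hs => lt_of_le_of_lt (by linarith [hb.1]) hs.1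

end Real

theorem exists_ne_zero_le_ofReal_of_le_abs {g : ℝ → ℝ} (hg0 : g 0 = 0)
    (hgeven : ∀ x, g (-x) = g x) (hgmono : StrictMonoOn g (Ici 0)) :
    ∀ ε > 0, ∃ c ≠ 0, ∀ x, ε ≤ |x| → c ≤ ENNReal.ofReal (g x) := by
  intro ε hε
  refine ⟨ENNReal.ofReal (g ε), ?_, fun x hx => ENNReal.ofReal_le_ofReal ?_⟩
  · rw [ne_eq, ENNReal.ofReal_eq_zero, not_le, ← hg0]
    exact hgmono self_mem_Ici (mem_Ici.2 hε.le) hε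
  · have hgabs : g |x| = g x := by
      rcases abs_choice x with h | h <;> rw [h]
      exact hgeven x
    rw [← hgabs]
    exact hgmono.monotoneOn (mem_Ici.2 hε.le) (mem_Ici.2 (abs_nonneg x)) hx

theorem barbalat_variant_general (g : ℝ → ℝ) (hg0 : g 0 = 0)
    (hgeven : ∀ x, g (-x) = g x)
    (hgmono : StrictMonoOn g (Ici (0:ℝ)))
    (φ φ' : ℝ → ℝ)
    (hφ : ∀ t ∈ Ici (0:ℝ), HasDerivWithinAt φ (φ' t) (Ici (0:ℝ)) t)
    (K : NNReal) (hφ' : LipschitzOnWith K φ' (Ici (0:ℝ)))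
    (hint : (∫⁻ s in Ioi (0:ℝ), ENNReal.ofReal (g (φ s))) < ⊤) :
    Tendsto φ atTop (𝓝 0) ∧ Tendsto φ' atTop (𝓝 0) := by
  have hφ0 := tendsto_zero_of_lipschitz_deriv_of_lintegral_ne_top hφ hφ'
    (exists_ne_zero_le_ofReal_of_le_abs hg0 hgeven hgmono) hint.ne
  exact ⟨hφ0, tendsto_zero_of_lipschitz_deriv_of_tendsto_zero hφ hφ' hφ0⟩

/-- the variant of Barbălat's lemma.  If `g` is of class `MK` (continuous,
null at `0`, even, strictly increasing on `[0,∞)`, nonnegative), `φ : [0,∞) → ℝ` is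
differentiable with Lipschitz derivative `φ'`, and `∫₀^∞ g(φ(s)) ds < ∞`, then
`φ(s) → 0` and `φ'(s) → 0` as `s → ∞`. -/
theorem barbalat_variant (g : ℝ → ℝ) (hgc : Continuous g) (hg0 : g 0 = 0)
    (hgnn : ∀ x, 0 ≤ g x) (hgeven : ∀ x, g (-x) = g x)
    (hgmono : StrictMonoOn g (Ici (0:ℝ)))
    (φ φ' : ℝ → ℝ)
    (hφ : ∀ t ∈ Ici (0:ℝ), HasDerivWithinAt φ (φ' t) (Ici (0:ℝ)) t)
    (K : NNReal) (hφ' : LipschitzOnWith K φ' (Ici (0:ℝ)))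
    (hint : (∫⁻ s in Ioi (0:ℝ), ENNReal.ofReal (g (φ s))) < ⊤) :
    Tendsto φ atTop (𝓝 0) ∧ Tendsto φ' atTop (𝓝 0) :=
  barbalat_variant_general g hg0 hgeven hgmono φ φ' hφ K hφ' hint
end

section
/- Let L(x) := (x+2)²(x−2)²x²(x+1)²(x−1)² and let ℳ be the set of measurable functions u : [0,∞) → [−1,1]. For j = 1, 2 define v_j(x) := inf{ ∫₀^{t_{⋆j}} L(φ(s)) ds : u ∈ ℳ, φ locally absolutely continuous with φ(0) = x and φ' = u a.e., t_{⋆j} := inf{t ≥ 0 : φ(t) ∈ T_j} < ∞ }, where T₁ = {0} and T₂ = {0, 2, −2}. Then v₁ and v₂ are both finite, continuous, nonnegative, and vanish at 0; each is a viscosity solution of |w'(x)| = L(x) on ℝ ∖ {0}; and v₁ ≠ v₂ (in particular v₂(2) = 0 < v₁(2)). Hence the equation |w'(x)| = L(x) on ℝ ∖ {0} admits more than one bounded-from-below continuous viscosity solution vanishing on the target {0}. -/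
open MeasureTheory Set Filter Topology
open scoped ENNReal

noncomputable section

/-- The Lagrangian `L(x) = (x+2)²(x−2)²x²(x+1)²(x−1)²`. -/
def LagL (x : ℝ) : ℝ := (x+2)^2 * (x-2)^2 * x^2 * (x+1)^2 * (x-1)^2

/-- Viscosity solution of `F(x, w'(x)) = 0` on the open set `G ⊆ ℝ`. -/
def IsViscositySol1 (F : ℝ → ℝ → ℝ) (G : Set ℝ) (w : ℝ → ℝ) : Prop :=
  (∀ γ : ℝ → ℝ, ContDiffOn ℝ 1 γ G → ∀ x₀ ∈ G,
      IsLocalMinOn (fun x => w x - γ x) G x₀ → 0 ≤ F x₀ (deriv γ x₀)) ∧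
  (∀ γ : ℝ → ℝ, ContDiffOn ℝ 1 γ G → ∀ x₁ ∈ G,
      IsLocalMaxOn (fun x => w x - γ x) G x₁ → F x₁ (deriv γ x₁) ≤ 0)

/-- The exit time value function for the dynamics `ẋ = u`, `u ∈ [−1,1]`, Lagrangian
`LagL` and target `T`, as an extended real. -/
def fullerVal (T : Set ℝ) (x : ℝ) : EReal :=
  sInf { c : EReal | ∃ u φ : ℝ → ℝ, Measurable u ∧ (∀ t, u t ∈ Icc (-1:ℝ) 1) ∧
      Continuous φ ∧ φ 0 = x ∧ (∀ t, 0 ≤ t → φ t = x + ∫ s in (0:ℝ)..t, u s) ∧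
      {t : ℝ | 0 ≤ t ∧ φ t ∈ T}.Nonempty ∧
      c = ((∫⁻ s in Ioc (0:ℝ) (sInf {t : ℝ | 0 ≤ t ∧ φ t ∈ T}),
            ENNReal.ofReal (LagL (φ s))) : EReal) }

/-!
Let `G` be a primitive of `L`. A trajectory with `|φ'| ≤ 1` on `[0, τ]` pushes Lebesgue measure
on `[0, τ]` forward to a measure dominating Lebesgue measure on the interval between `φ 0` and
`φ τ`, so its cost is at least `|G (φ τ) - G (φ 0)|`; running at unit speed straight to `a`
costs exactly `|G x - G a|`. Hence for a finite target `T` the value function is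
`min_{a ∈ T} |G x - G a|`. Every branch `|G · - G a|` with `L a = 0` is differentiable with
`|derivative| = L`, so the minimum is touched from above by such branches (the supersolution
inequality), and it varies no faster than `G` (the subsolution inequality). As `G` is strictly
increasing, `v₁ 2 = G 2 - G 0 > 0 = v₂ 2`.
-/

theorem LipschitzOnWith.volume_restrict_uIcc_le_map {f : ℝ → ℝ} {K : NNReal} {a b : ℝ}
    (hab : a ≤ b) (hf : LipschitzOnWith K f (Icc a b)) :
    volume.restrict (uIcc (f a) (f b)) ≤ (K : ℝ≥0∞) • (volume.restrict (Icc a b)).map f := by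
  have hfm : AEMeasurable f (volume.restrict (Icc a b)) :=
    hf.continuousOn.aemeasurable measurableSet_Icc
  rw [Measure.le_iff]
  intro s hs
  rw [Measure.smul_apply, Measure.map_apply_of_aemeasurable hfm hs,
    Measure.restrict_apply hs, Measure.restrict_apply' measurableSet_Icc, smul_eq_mul]
  have hsub : s ∩ uIcc (f a) (f b) ⊆ f '' (f ⁻¹' s ∩ Icc a b) := by
    rintro y ⟨hys, hy⟩
    obtain ⟨t, ht, rfl⟩ := intermediate_value_uIcc (uIcc_of_le hab ▸ hf.continuousOn) hy
    exact ⟨t, ⟨hys, uIcc_of_le hab ▸ ht⟩, rfl⟩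
  calc volume (s ∩ uIcc (f a) (f b)) ≤ volume (f '' (f ⁻¹' s ∩ Icc a b)) := measure_mono hsub
    _ ≤ K * volume (f ⁻¹' s ∩ Icc a b) := by
      simpa [← MeasureTheory.hausdorffMeasure_real] using
        (hf.mono inter_subset_right).hausdorffMeasure_image_le zero_le_one

theorem LipschitzOnWith.setLIntegral_uIcc_le {f : ℝ → ℝ} {a b : ℝ} (hab : a ≤ b)
    (hf : LipschitzOnWith 1 f (Icc a b)) {g : ℝ → ℝ≥0∞} :
    ∫⁻ y in uIcc (f a) (f b), g y ≤ ∫⁻ s in Icc a b, g (f s) := by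
  calc ∫⁻ y in uIcc (f a) (f b), g y ≤ ∫⁻ y, g y ∂(volume.restrict (Icc a b)).map f := by
        simpa using lintegral_mono' (hf.volume_restrict_uIcc_le_map hab) le_rfl
    _ ≤ ∫⁻ s in Icc a b, g (f s) := lintegral_map_le g f

theorem lipschitzOnWith_of_eq_add_integral {u φ : ℝ → ℝ} {x : ℝ} {K : NNReal}
    (hu : Measurable u) (hK : ∀ t, |u t| ≤ K) (hφ : ∀ t, 0 ≤ t → φ t = x + ∫ s in (0:ℝ)..t, u s) :
    LipschitzOnWith K φ (Ici 0) := by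
  have hint : ∀ a b : ℝ, IntervalIntegrable u volume a b := fun a b =>
    (intervalIntegrable_const (c := (K : ℝ))).mono_fun' hu.aestronglyMeasurable
      (ae_of_all _ hK)
  refine LipschitzOnWith.of_dist_le_mul fun t ht s hs => ?_
  rw [Real.dist_eq, Real.dist_eq, hφ t ht, hφ s hs, add_sub_add_left_eq_sub,
    intervalIntegral.integral_interval_sub_left (hint 0 t) (hint 0 s)]
  simpa using intervalIntegral.norm_integral_le_of_norm_le_const (a := s) (b := t)
    fun r _ => (Real.norm_eq_abs (u r)).trans_le (hK r)

theorem IsLocalMinOn.hasDerivAt_nonneg_of_Ici {f : ℝ → ℝ} {f' a : ℝ}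
    (h : IsLocalMinOn f (Ici a) a) (hf : HasDerivAt f f' a) : 0 ≤ f' := by
  have hcone : (1 : ℝ) ∈ posTangentConeAt (Ici a) a :=
    mem_posTangentConeAt_of_segment_subset <| by
      rw [segment_eq_Icc (by linarith)]; exact Icc_subset_Ici_self
  simpa using h.hasFDerivWithinAt_nonneg hf.hasFDerivAt.hasFDerivWithinAt hcone

theorem IsLocalMinOn.hasDerivAt_nonpos_of_Iic {f : ℝ → ℝ} {f' a : ℝ}
    (h : IsLocalMinOn f (Iic a) a) (hf : HasDerivAt f f' a) : f' ≤ 0 := by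
  have hcone : (-1 : ℝ) ∈ posTangentConeAt (Iic a) a :=
    mem_posTangentConeAt_of_segment_subset <| by
      rw [segment_symm, segment_eq_Icc (by linarith)]; exact Icc_subset_Iic_self
  simpa using h.hasFDerivWithinAt_nonneg hf.hasFDerivAt.hasFDerivWithinAt hcone

section Eikonal

variable {ℓ G w γ : ℝ → ℝ} {x p : ℝ}

theorem HasDerivAt.eq_of_isLocalMin_sub_of_le {b : ℝ → ℝ} {d : ℝ} (hγ : HasDerivAt γ p x)
    (hb : HasDerivAt b d x) (hbw : b x = w x) (hwb : ∀ᶠ y in 𝓝 x, w y ≤ b y)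
    (hmin : IsLocalMin (fun y => w y - γ y) x) : p = d := by
  have hbmin : IsLocalMin (fun y => b y - γ y) x := by
    filter_upwards [hmin, hwb] with y hy hwy
    linarith
  linarith [hbmin.hasDerivAt_eq_zero (hb.sub hγ)]

theorem HasDerivAt.abs_le_of_isLocalMax_sub (hγ : HasDerivAt γ p x) (hG : HasDerivAt G (ℓ x) x)
    (hGm : Monotone G) (hw : ∀ y, |w y - w x| ≤ |G y - G x|)
    (hmax : IsLocalMax (fun y => w y - γ y) x) : |p| ≤ ℓ x := by
  have hright : IsLocalMinOn (fun y => γ y + G y) (Ici x) x := by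
    filter_upwards [nhdsWithin_le_nhds hmax, self_mem_nhdsWithin] with y hy (hxy : x ≤ y)
    have := hw y
    rw [abs_of_nonneg (sub_nonneg.2 (hGm hxy)), abs_le] at this
    linarith
  have hleft : IsLocalMinOn (fun y => γ y - G y) (Iic x) x := by
    filter_upwards [nhdsWithin_le_nhds hmax, self_mem_nhdsWithin] with y hy (hyx : y ≤ x)
    have := hw y
    rw [abs_of_nonpos (sub_nonpos.2 (hGm hyx)), abs_le] at this
    linarith
  have h₁ := hright.hasDerivAt_nonneg_of_Ici (hγ.add hG)
  have h₂ := hleft.hasDerivAt_nonpos_of_Iic (hγ.sub hG)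
  exact abs_le.2 ⟨by linarith, by linarith⟩

theorem isViscositySol1_of_touch {U : Set ℝ} (hU : IsOpen U) (hG : ∀ x, HasDerivAt G (ℓ x) x)
    (hGm : Monotone G) (hw : ∀ x y, |w y - w x| ≤ |G y - G x|)
    (htouch : ∀ x, ∃ b d, HasDerivAt b d x ∧ |d| = ℓ x ∧ b x = w x ∧ ∀ᶠ y in 𝓝 x, w y ≤ b y) :
    IsViscositySol1 (fun x p => |p| - ℓ x) U w := by
  have hγ' : ∀ γ : ℝ → ℝ, ContDiffOn ℝ 1 γ U → ∀ x ∈ U, HasDerivAt γ (deriv γ x) x :=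
    fun γ hγ x hx => ((hγ.contDiffAt (hU.mem_nhds hx)).differentiableAt one_ne_zero).hasDerivAt
  refine ⟨fun γ hγ x hx hmin => ?_, fun γ hγ x hx hmax => ?_⟩
  · obtain ⟨b, d, hb, hbd, hbw, hwb⟩ := htouch x
    have hpd := (hγ' γ hγ x hx).eq_of_isLocalMin_sub_of_le hb hbw hwb
      (hmin.isLocalMin (hU.mem_nhds hx))
    show 0 ≤ |deriv γ x| - ℓ x
    rw [hpd, hbd, sub_self]
  · exact sub_nonpos.2 <| (hγ' γ hγ x hx).abs_le_of_isLocalMax_sub (hG x) hGm (hw x)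
      (hmax.isLocalMax (hU.mem_nhds hx))

end Eikonal

section InfAbsSub

variable {ℓ G : ℝ → ℝ}

theorem exists_hasDerivAt_abs_sub (hG : ∀ x, HasDerivAt G (ℓ x) x) (hGm : StrictMono G)
    (hℓ : ∀ x, 0 ≤ ℓ x) {a : ℝ} (ha : ℓ a = 0) (x : ℝ) :
    ∃ d, HasDerivAt (fun y => |G y - G a|) d x ∧ |d| = ℓ x := by
  rcases lt_trichotomy x a with hxa | rfl | hax
  · refine ⟨-ℓ x, ?_, by rw [abs_neg, abs_of_nonneg (hℓ x)]⟩
    simpa [Function.comp_def] using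
      (hasDerivAt_abs_neg (sub_neg.2 (hGm hxa))).comp x ((hG x).sub_const (G a))
  · refine ⟨0, ?_, by rw [abs_zero, ha]⟩
    have h := hG x
    rw [ha, hasDerivAt_iff_isLittleO] at h
    rw [hasDerivAt_iff_isLittleO]
    simpa using h.norm_left
  · refine ⟨ℓ x, ?_, abs_of_nonneg (hℓ x)⟩
    simpa [Function.comp_def] using
      (hasDerivAt_abs_pos (sub_pos.2 (hGm hax))).comp x ((hG x).sub_const (G a))

variable (G) (T : Finset ℝ) (hT : T.Nonempty)

def infAbsSub (x : ℝ) : ℝ := T.inf' hT fun a => |G x - G a|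

variable {G T hT}

theorem infAbsSub_nonneg (x : ℝ) : 0 ≤ infAbsSub G T hT x :=
  Finset.le_inf' hT _ fun _ _ => abs_nonneg _

theorem infAbsSub_le {x a : ℝ} (ha : a ∈ T) : infAbsSub G T hT x ≤ |G x - G a| :=
  Finset.inf'_le _ ha

theorem exists_infAbsSub_eq (x : ℝ) : ∃ a ∈ T, infAbsSub G T hT x = |G x - G a| :=
  Finset.exists_mem_eq_inf' hT _

theorem infAbsSub_eq_zero {a : ℝ} (ha : a ∈ T) : infAbsSub G T hT a = 0 :=
  le_antisymm ((infAbsSub_le ha).trans_eq (by simp)) (infAbsSub_nonneg a)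

theorem abs_infAbsSub_sub_le (x y : ℝ) :
    |infAbsSub G T hT y - infAbsSub G T hT x| ≤ |G y - G x| := by
  have hle : ∀ x y, infAbsSub G T hT y ≤ infAbsSub G T hT x + |G y - G x| := fun x y => by
    obtain ⟨a, ha, hxa⟩ := exists_infAbsSub_eq (hT := hT) x
    calc infAbsSub G T hT y ≤ |G y - G a| := infAbsSub_le ha
      _ ≤ |G x - G a| + |G y - G x| := by
        rw [add_comm]; exact abs_sub_le _ _ _
      _ = infAbsSub G T hT x + |G y - G x| := by rw [hxa]
  rw [abs_sub_le_iff]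
  constructor
  · linarith [hle x y]
  · linarith [hle y x, abs_sub_comm (G y) (G x)]

theorem continuous_infAbsSub (hG : Continuous G) : Continuous (infAbsSub G T hT) :=
  Continuous.finset_inf'_apply hT fun _ _ => (hG.sub continuous_const).abs

theorem isViscositySol1_infAbsSub {U : Set ℝ} (hU : IsOpen U) (hG : ∀ x, HasDerivAt G (ℓ x) x)
    (hGm : StrictMono G) (hℓ : ∀ x, 0 ≤ ℓ x) (hℓT : ∀ a ∈ T, ℓ a = 0) :
    IsViscositySol1 (fun x p => |p| - ℓ x) U (infAbsSub G T hT) := by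
  refine isViscositySol1_of_touch hU hG hGm.monotone abs_infAbsSub_sub_le fun x => ?_
  obtain ⟨a, ha, hxa⟩ := exists_infAbsSub_eq (hT := hT) x
  obtain ⟨d, hd, hdℓ⟩ := exists_hasDerivAt_abs_sub hG hGm hℓ (hℓT a ha) x
  exact ⟨_, d, hd, hdℓ, hxa.symm, Eventually.of_forall fun y => infAbsSub_le ha⟩

end InfAbsSub

theorem lagL_nonneg (x : ℝ) : 0 ≤ LagL x := by unfold LagL; positivity

theorem continuous_lagL : Continuous LagL := by unfold LagL; fun_prop

theorem lagL_pos {x : ℝ} (hx : x ∉ ({0, 1, -1, 2, -2} : Set ℝ)) : 0 < LagL x := by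
  simp only [mem_insert_iff, mem_singleton_iff, not_or] at hx
  obtain ⟨h₀, h₁, h₁', h₂, h₂'⟩ := hx
  have hprod : (x + 2) * (x - 2) * x * (x + 1) * (x - 1) ≠ 0 := by
    simp only [ne_eq, mul_eq_zero, not_or]
    refine ⟨⟨⟨⟨?_, ?_⟩, h₀⟩, ?_⟩, ?_⟩ <;> intro h
    exacts [h₂' (by linarith), h₂ (by linarith), h₁' (by linarith), h₁ (by linarith)]
  rw [show LagL x = ((x + 2) * (x - 2) * x * (x + 1) * (x - 1)) ^ 2 by unfold LagL; ring]
  positivity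

def lagPrim (x : ℝ) : ℝ := ∫ y in (0:ℝ)..x, LagL y

theorem hasDerivAt_lagPrim (x : ℝ) : HasDerivAt lagPrim (LagL x) x :=
  continuous_lagL.integral_hasStrictDerivAt 0 x |>.hasDerivAt

theorem continuous_lagPrim : Continuous lagPrim :=
  continuous_iff_continuousAt.2 fun x => (hasDerivAt_lagPrim x).continuousAt

theorem lagPrim_sub_lagPrim (a b : ℝ) : lagPrim b - lagPrim a = ∫ y in a..b, LagL y :=
  intervalIntegral.integral_interval_sub_left (continuous_lagL.intervalIntegrable _ _)
    (continuous_lagL.intervalIntegrable _ _)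

theorem strictMono_lagPrim : StrictMono lagPrim := by
  intro a b hab
  obtain ⟨c, hc, hcL⟩ := ((Icc_infinite hab).sdiff (toFinite {0, 1, -1, 2, -2})).nonempty
  have hpos : 0 < ∫ y in a..b, LagL y :=
    intervalIntegral.integral_pos hab continuous_lagL.continuousOn (fun y _ => lagL_nonneg y)
      ⟨c, hc, lagL_pos hcL⟩
  linarith [lagPrim_sub_lagPrim a b]

theorem lintegral_uIoc_lagL (a b : ℝ) :
    ∫⁻ y in uIoc a b, ENNReal.ofReal (LagL y) = ENNReal.ofReal |lagPrim b - lagPrim a| := by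
  rw [lagPrim_sub_lagPrim, intervalIntegral.abs_integral_eq_abs_integral_uIoc,
    abs_of_nonneg (setIntegral_nonneg measurableSet_uIoc fun y _ => lagL_nonneg y),
    ofReal_integral_eq_lintegral_ofReal continuous_lagL.integrableOn_uIoc
      (ae_of_all _ lagL_nonneg)]

theorem le_fullerVal {T : Set ℝ} (hT : IsClosed T) {x v : ℝ}
    (hv : ∀ a ∈ T, v ≤ |lagPrim x - lagPrim a|) : (v : EReal) ≤ fullerVal T x := by
  refine le_sInf ?_
  rintro _ ⟨u, φ, hu, hu₁, hφc, hφ₀, hφ, hne, rfl⟩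
  set τ := sInf {t : ℝ | 0 ≤ t ∧ φ t ∈ T}
  have hτ : τ ∈ {t : ℝ | 0 ≤ t ∧ φ t ∈ T} :=
    (isClosed_Ici.inter (hT.preimage hφc)).csInf_mem hne ⟨0, fun t ht => ht.1⟩
  have hlip : LipschitzOnWith 1 φ (Icc 0 τ) :=
    (lipschitzOnWith_of_eq_add_integral hu (fun t => by simpa [abs_le] using hu₁ t) hφ).mono
      Icc_subset_Ici_self
  have hcost : ENNReal.ofReal |lagPrim (φ τ) - lagPrim x|
      ≤ ∫⁻ s in Ioc 0 τ, ENNReal.ofReal (LagL (φ s)) :=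
    calc ENNReal.ofReal |lagPrim (φ τ) - lagPrim x|
        = ∫⁻ y in uIoc (φ 0) (φ τ), ENNReal.ofReal (LagL y) := by rw [lintegral_uIoc_lagL, hφ₀]
      _ ≤ ∫⁻ y in uIcc (φ 0) (φ τ), ENNReal.ofReal (LagL y) := lintegral_mono_set uIoc_subset_uIcc
      _ ≤ ∫⁻ s in Icc 0 τ, ENNReal.ofReal (LagL (φ s)) := hlip.setLIntegral_uIcc_le hτ.1
      _ = ∫⁻ s in Ioc 0 τ, ENNReal.ofReal (LagL (φ s)) := by rw [restrict_Ioc_eq_restrict_Icc]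
  calc (v : EReal) ≤ ((ENNReal.ofReal |lagPrim (φ τ) - lagPrim x| : ℝ≥0∞) : EReal) := by
        rw [EReal.coe_ennreal_ofReal, max_eq_left (abs_nonneg _), abs_sub_comm]
        exact_mod_cast hv _ hτ.2
    _ ≤ _ := by exact_mod_cast hcost

theorem fullerVal_le {T : Set ℝ} {x a : ℝ} (ha : a ∈ T) :
    fullerVal T x ≤ ((|lagPrim x - lagPrim a| : ℝ) : EReal) := by
  obtain ⟨σ, hσ, hσa⟩ : ∃ σ : ℝ, |σ| = 1 ∧ σ * |a - x| + x = a := by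
    rcases le_total 0 (a - x) with h | h
    · exact ⟨1, abs_one, by rw [abs_of_nonneg h]; ring⟩
    · exact ⟨-1, by simp, by rw [abs_of_nonpos h]; ring⟩
  set T₀ := |a - x|
  set φ : ℝ → ℝ := fun t => σ * t + x
  have hφT₀ : φ T₀ ∈ T := by simpa [φ, hσa] using ha
  set τ := sInf {t : ℝ | 0 ≤ t ∧ φ t ∈ T}
  have hτT₀ : τ ≤ T₀ := csInf_le ⟨0, fun t ht => ht.1⟩ ⟨abs_nonneg _, hφT₀⟩
  have hσ₀ : σ ≠ 0 := by rintro rfl; simp at hσ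
  have hcost : ∫ s in Ioc 0 T₀, LagL (φ s) = |lagPrim x - lagPrim a| := by
    rw [← intervalIntegral.integral_of_le (abs_nonneg _),
      ← abs_of_nonneg (intervalIntegral.integral_nonneg (abs_nonneg _) fun s _ => lagL_nonneg _),
      intervalIntegral.integral_comp_mul_add LagL hσ₀, hσa, mul_zero, zero_add,
      ← lagPrim_sub_lagPrim, abs_smul, abs_inv, hσ, inv_one, one_smul, abs_sub_comm]
  have hφ : ∀ t, 0 ≤ t → φ t = x + ∫ _ in (0:ℝ)..t, σ := fun t _ => by
    simp only [φ, intervalIntegral.integral_const, sub_zero, smul_eq_mul]; ring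
  refine sInf_le_of_le ⟨fun _ => σ, φ, measurable_const, fun _ => abs_le.1 hσ.le,
    by fun_prop, by simp [φ], hφ, ⟨T₀, abs_nonneg _, hφT₀⟩, rfl⟩ ?_
  calc ((∫⁻ s in Ioc 0 τ, ENNReal.ofReal (LagL (φ s)) : ℝ≥0∞) : EReal)
      ≤ ((∫⁻ s in Ioc 0 T₀, ENNReal.ofReal (LagL (φ s)) : ℝ≥0∞) : EReal) := by
        exact_mod_cast lintegral_mono_set (Ioc_subset_Ioc_right hτT₀)
    _ = ((|lagPrim x - lagPrim a| : ℝ) : EReal) := by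
        have hint : IntegrableOn (fun s => LagL (φ s)) (Ioc 0 T₀) :=
          (continuous_lagL.comp (by fun_prop : Continuous φ)).integrableOn_Ioc
        rw [← ofReal_integral_eq_lintegral_ofReal hint (ae_of_all _ fun s => lagL_nonneg _),
          hcost, EReal.coe_ennreal_ofReal, max_eq_left (abs_nonneg _)]

theorem fullerVal_coe_finset (T : Finset ℝ) (hT : T.Nonempty) (x : ℝ) :
    fullerVal T x = infAbsSub lagPrim T hT x := by
  obtain ⟨a, ha, hxa⟩ := exists_infAbsSub_eq (hT := hT) x
  exact le_antisymm (hxa ▸ fullerVal_le ha) (le_fullerVal T.isClosed fun _ => infAbsSub_le)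

theorem isViscositySol1_infAbsSub_lagPrim {T : Finset ℝ} (hT : T.Nonempty)
    (hLT : ∀ a ∈ T, LagL a = 0) :
    IsViscositySol1 (fun x p => |p| - LagL x) ({0}ᶜ) (infAbsSub lagPrim T hT) :=
  isViscositySol1_infAbsSub isOpen_compl_singleton hasDerivAt_lagPrim strictMono_lagPrim
    lagL_nonneg hLT

/-- the nonuniqueness example.  The value functions `v₁` (target `{0}`)
and `v₂` (target `{0,2,−2}`) for the data `ẋ = u ∈ [−1,1]`, `ℓ = LagL`, are finite,
continuous, nonnegative, vanish at `0`, are both viscosity solutions of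
`|w'(x)| = L(x)` on `ℝ ∖ {0}`, and differ (`v₂(2) = 0 < v₁(2)`): so the HJBE with
target `{0}` has more than one bounded-from-below continuous viscosity solution
vanishing on the target. -/
theorem two_solutions_example :
    ∃ v₁ v₂ : ℝ → ℝ,
      (∀ x, (v₁ x : EReal) = fullerVal {0} x) ∧
      (∀ x, (v₂ x : EReal) = fullerVal {0, 2, -2} x) ∧
      Continuous v₁ ∧ Continuous v₂ ∧
      (∀ x, 0 ≤ v₁ x) ∧ (∀ x, 0 ≤ v₂ x) ∧
      v₁ 0 = 0 ∧ v₂ 0 = 0 ∧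
      IsViscositySol1 (fun x p => |p| - LagL x) ({0}ᶜ) v₁ ∧
      IsViscositySol1 (fun x p => |p| - LagL x) ({0}ᶜ) v₂ ∧
      v₂ 2 = 0 ∧ 0 < v₁ 2 := by
  have h₁ : ({0} : Finset ℝ).Nonempty := Finset.singleton_nonempty 0
  have h₂ : ({0, 2, -2} : Finset ℝ).Nonempty := Finset.insert_nonempty _ _
  refine ⟨infAbsSub lagPrim {0} h₁, infAbsSub lagPrim {0, 2, -2} h₂,
    fun x => by simpa using (fullerVal_coe_finset _ h₁ x).symm,
    fun x => by simpa using (fullerVal_coe_finset _ h₂ x).symm,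
    continuous_infAbsSub continuous_lagPrim, continuous_infAbsSub continuous_lagPrim,
    infAbsSub_nonneg, infAbsSub_nonneg, infAbsSub_eq_zero (by simp), infAbsSub_eq_zero (by simp),
    isViscositySol1_infAbsSub_lagPrim h₁ (by simp [LagL]),
    isViscositySol1_infAbsSub_lagPrim h₂ (by norm_num [LagL]), infAbsSub_eq_zero (by simp), ?_⟩
  simpa [infAbsSub, sub_eq_zero] using (strictMono_lagPrim (two_pos : (0:ℝ) < 2)).ne'
end
end

section
/- Assume the relaxed-control exit-time setup (A nonempty compact metric space; T ⊆ ℝ^N closed nonempty; f continuous and uniformly Lipschitz in x; ℓ : ℝ^N × A → [0,∞) continuous). Write points of ℝ^N as x = (x₁, x₂, …, x_N) and let f₁ denote the first component of f. Suppose: (i) there are constants K > 0 and C > 0 such that ℓ(x,a) ≥ K|x₁|^C for all a ∈ A and x ∈ ℝ^N; and (ii) for every y ∈ ℝ^{N−1} with (0,y) ∉ T, 0 ∉ { f₁^r((0,y), m) : m ∈ A^r }. Then hypothesis (H5) holds: for every t ∈ (0,∞), every β ∈ 𝒜, and every x ∈ ℝ^N ∖ T, ∫₀^t ℓ^r(y_x(s,β),β(s))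 ds > 0. -/
open MeasureTheory Set Filter Topology Metric
open scoped RealInnerProductSpace ENNReal

noncomputable section

/-- The set of relaxed controls: measurable families `t ↦ β t` of Radon probability
measures on the control space `A` (measurability in the weak-* sense). -/
def IsRelaxedControl {A : Type*} [MetricSpace A] [MeasurableSpace A]
    (β : ℝ → Measure A) : Prop :=
  (∀ t, IsProbabilityMeasure (β t)) ∧
    ∀ g : C(A, ℝ), Measurable fun t => ∫ a, g a ∂(β t)

/-- `y` is the trajectory of `ẏ = f^r(y, β)` with `y 0 = x` (integral form). -/
def IsTrajectory {N : ℕ} {A : Type*} [MeasurableSpace A]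
    (f : EuclideanSpace ℝ (Fin N) → A → EuclideanSpace ℝ (Fin N))
    (β : ℝ → Measure A) (x : EuclideanSpace ℝ (Fin N))
    (y : ℝ → EuclideanSpace ℝ (Fin N)) : Prop :=
  y 0 = x ∧ Continuous y ∧
    ∀ t, 0 ≤ t → y t = x + ∫ s in (0:ℝ)..t, ∫ a, f (y s) a ∂(β s)

/-- The set of times `t ≥ 0` at which the trajectory `y` lies in the target `T`;
its infimum is the exit time `t_x(β)`, and `t_x(β) < ∞` iff this set is nonempty. -/
def exitTimes {N : ℕ} (T : Set (EuclideanSpace ℝ (Fin N)))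
    (y : ℝ → EuclideanSpace ℝ (Fin N)) : Set ℝ :=
  {t : ℝ | 0 ≤ t ∧ y t ∈ T}

/-- The running cost `∫₀^t ℓ^r(y(s), β(s)) ds`, as an extended nonnegative real. -/
def runCost {N : ℕ} {A : Type*} [MeasurableSpace A]
    (ℓ : EuclideanSpace ℝ (Fin N) → A → ℝ) (β : ℝ → Measure A)
    (y : ℝ → EuclideanSpace ℝ (Fin N)) (t : ℝ) : ℝ≥0∞ :=
  ∫⁻ s in Ioc (0:ℝ) t, ENNReal.ofReal (∫ a, ℓ (y s) a ∂(β s))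

/-- The value function `v(x)` of the exit time problem, as an extended real
(`+∞` when no relaxed control brings `x` to the target in finite time). -/
def valueFn {N : ℕ} {A : Type*} [MetricSpace A] [MeasurableSpace A]
    (T : Set (EuclideanSpace ℝ (Fin N))) (ℓ : EuclideanSpace ℝ (Fin N) → A → ℝ)
    (Y : EuclideanSpace ℝ (Fin N) → (ℝ → Measure A) → ℝ → EuclideanSpace ℝ (Fin N))
    (x : EuclideanSpace ℝ (Fin N)) : EReal :=
  sInf { c : EReal | ∃ β : ℝ → Measure A, IsRelaxedControl β ∧
      (exitTimes T (Y x β)).Nonempty ∧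
      c = ((runCost ℓ β (Y x β) (sInf (exitTimes T (Y x β)))) : EReal) }

/-- Viscosity solution of `F(x, Dw(x)) = 0` on the open set `G`, via `C¹` test functions. -/
def IsViscositySol {N : ℕ}
    (F : EuclideanSpace ℝ (Fin N) → EuclideanSpace ℝ (Fin N) → ℝ)
    (G : Set (EuclideanSpace ℝ (Fin N))) (w : EuclideanSpace ℝ (Fin N) → ℝ) : Prop :=
  (∀ γ : EuclideanSpace ℝ (Fin N) → ℝ, ContDiffOn ℝ 1 γ G → ∀ x₀ ∈ G,
      IsLocalMinOn (fun x => w x - γ x) G x₀ → 0 ≤ F x₀ (gradient γ x₀)) ∧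
  (∀ γ : EuclideanSpace ℝ (Fin N) → ℝ, ContDiffOn ℝ 1 γ G → ∀ x₁ ∈ G,
      IsLocalMaxOn (fun x => w x - γ x) G x₁ → F x₁ (gradient γ x₁) ≤ 0)

/-- The Hamiltonian `sup_{m ∈ A^r} { −f^r(x,m)·p − ℓ^r(x,m) }` of the HJBE. -/
def HJB {N : ℕ} {A : Type*} [MetricSpace A] [MeasurableSpace A]
    (f : EuclideanSpace ℝ (Fin N) → A → EuclideanSpace ℝ (Fin N))
    (ℓ : EuclideanSpace ℝ (Fin N) → A → ℝ)
    (x p : EuclideanSpace ℝ (Fin N)) : ℝ :=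
  ⨆ m : ProbabilityMeasure A,
    (-(inner (𝕜 := ℝ) (∫ a, f x a ∂(m : Measure A)) p : ℝ) - ∫ a, ℓ x a ∂(m : Measure A))

/-!
If the running cost vanished on `(0, t]`, the lower bound `ℓ ≥ K |x₁|^C` would keep the
trajectory in the hyperplane `{x₁ = 0}` throughout `(0, t]`. By the Lebesgue differentiation
theorem the integral equation can then be differentiated almost everywhere, giving
`f₁^r(y(s), β(s)) = 0` for a.e. `s ∈ (0, t)`. For small `s > 0`, however, `y(s)` is still outside
the closed target, and there (ii) says exactly that `f₁^r` cannot vanish.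
-/

theorem Continuous.integrable_of_compactSpace {X E : Type*} [TopologicalSpace X] [CompactSpace X]
    [MeasurableSpace X] [OpensMeasurableSpace X] [NormedAddCommGroup E]
    {g : X → E} (hg : Continuous g) (m : Measure X) [IsFiniteMeasure m] : Integrable g m :=
  hg.integrable_of_hasCompactSupport (HasCompactSupport.of_compactSpace g)

section RelaxedControl

variable {A : Type*} [MetricSpace A] [CompactSpace A] [MeasurableSpace A] [BorelSpace A]
  {ι : Type*} [Fintype ι]

theorem IsRelaxedControl.measurable_integral {β : ℝ → Measure A} (hβ : IsRelaxedControl β)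
    {g : A → EuclideanSpace ℝ ι} (hg : Continuous g) :
    Measurable fun t => ∫ a, g a ∂β t := by
  have := hβ.1
  have hgi (i : ι) : Continuous fun a => g a i := (EuclideanSpace.proj i).continuous.comp hg
  refine ((MeasurableEquiv.toLp 2 (ι → ℝ)).symm.measurableEmbedding.measurable_comp_iff
    (f := fun t => ∫ a, g a ∂β t)).1 (measurable_pi_lambda _ fun i => ?_)
  change Measurable fun t => (∫ a, g a ∂β t) i
  simp_rw [eval_integral_piLp fun i => (hgi i).integrable_of_compactSpace _]
  exact hβ.2 ⟨_, hgi i⟩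

/-- Carathéodory: the integrand is continuous in the state and measurable in time. -/
theorem IsRelaxedControl.measurable_integral_comp {β : ℝ → Measure A}
    (hβ : IsRelaxedControl β) {f : EuclideanSpace ℝ ι → A → EuclideanSpace ℝ ι}
    (hf : Continuous (Function.uncurry f)) {y : ℝ → EuclideanSpace ℝ ι} (hy : Measurable y) :
    Measurable fun s => ∫ a, f (y s) a ∂β s := by
  have := hβ.1
  have hcont (s : ℝ) : Continuous fun z => ∫ a, f z a ∂β s := by
    simpa only [Measure.restrict_univ] using
      continuous_parametric_integral_of_continuous (μ := β s) hf isCompact_univ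
  have hmeas (z : EuclideanSpace ℝ ι) : Measurable fun s => ∫ a, f z a ∂β s :=
    hβ.measurable_integral (hf.comp (Continuous.prodMk_right z))
  exact (measurable_uncurry_of_continuous_of_measurable hcont hmeas).comp
    (hy.prodMk measurable_id)

theorem IsRelaxedControl.intervalIntegrable_integral_comp {β : ℝ → Measure A}
    (hβ : IsRelaxedControl β) {f : EuclideanSpace ℝ ι → A → EuclideanSpace ℝ ι}
    (hf : Continuous (Function.uncurry f)) {y : ℝ → EuclideanSpace ℝ ι} (hy : Continuous y)
    (a b : ℝ) : IntervalIntegrable (fun s => ∫ a, f (y s) a ∂β s) volume a b := by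
  have := hβ.1
  obtain ⟨M, hM⟩ := ((isCompact_uIcc.image hy).prod isCompact_univ).exists_bound_of_continuousOn
    hf.continuousOn
  rw [intervalIntegrable_iff]
  refine Measure.integrableOn_of_bounded measure_Ioc_lt_top.ne
    (hβ.measurable_integral_comp hf hy.measurable).aestronglyMeasurable (M := M) ?_
  refine (ae_restrict_iff' measurableSet_uIoc).2 (ae_of_all _ fun s hs => ?_)
  simpa using norm_integral_le_of_norm_le_const (μ := β s) (ae_of_all _ fun a =>
    hM (y s, a) ⟨mem_image_of_mem y (uIoc_subset_uIcc hs), mem_univ a⟩)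

end RelaxedControl

theorem coord_eq_zero_of_hasDerivAt {ι : Type*} [Fintype ι] {y : ℝ → EuclideanSpace ℝ ι}
    {v : EuclideanSpace ℝ ι} {s : ℝ} (hy : HasDerivAt y v s) {i : ι}
    (h : ∀ᶠ r in 𝓝 s, y r i = 0) : v i = 0 := by
  have hyi : HasDerivAt (fun r => y r i) (v i) s :=
    (EuclideanSpace.proj (𝕜 := ℝ) i).hasFDerivAt.comp_hasDerivAt s hy
  exact hyi.unique ((hasDerivAt_const s (0 : ℝ)).congr_of_eventuallyEq h)

theorem eqOn_zero_of_runCost_eq_zero {N : ℕ} {A : Type*} [MeasurableSpace A]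
    {ℓ : EuclideanSpace ℝ (Fin N) → A → ℝ} {β : ℝ → Measure A}
    {y : ℝ → EuclideanSpace ℝ (Fin N)} {t : ℝ} {g : ℝ → ℝ} (hg : Continuous g) (hg₀ : 0 ≤ g)
    (hgℓ : ∀ s, g s ≤ ∫ a, ℓ (y s) a ∂β s) (hcost : runCost ℓ β y t = 0) :
    EqOn g 0 (Ioc 0 t) := by
  have hzero : ∫⁻ s in Ioc 0 t, ENNReal.ofReal (g s) = 0 :=
    nonpos_iff_eq_zero.1 <| hcost ▸ setLIntegral_mono' measurableSet_Ioc
      fun s _ => ENNReal.ofReal_le_ofReal (hgℓ s)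
  refine Measure.eqOn_Ioc_of_ae_eq (μ := volume) ?_ hg.continuousOn continuousOn_const
  filter_upwards [(lintegral_eq_zero_iff hg.measurable.ennreal_ofReal).1 hzero] with s hs
  exact le_antisymm (ENNReal.ofReal_eq_zero.1 hs) (hg₀ s)

section Trajectory

variable {N : ℕ} {A : Type*} [MeasurableSpace A]
  {f : EuclideanSpace ℝ (Fin N) → A → EuclideanSpace ℝ (Fin N)} {β : ℝ → Measure A}
  {x : EuclideanSpace ℝ (Fin N)} {y : ℝ → EuclideanSpace ℝ (Fin N)}

theorem IsTrajectory.ae_hasDerivAt (hy : IsTrajectory f β x y) {t : ℝ}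
    (hint : IntervalIntegrable (fun s => ∫ a, f (y s) a ∂β s) volume 0 t) :
    ∀ᵐ s, s ∈ Ioo 0 t → HasDerivAt y (∫ a, f (y s) a ∂β s) s := by
  filter_upwards [hint.ae_hasDerivAt_integral] with s hs hst
  have hderiv := (hs (Ioo_subset_Icc_self.trans Icc_subset_uIcc hst) 0 left_mem_uIcc).const_add x
  exact hderiv.congr_of_eventuallyEq <|
    (lt_mem_nhds hst.1).mono fun r hr => hy.2.2 r hr.le

theorem IsTrajectory.ae_integral_coord_eq_zero [MetricSpace A] [CompactSpace A] [BorelSpace A]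
    (hy : IsTrajectory f β x y) (hβ : IsRelaxedControl β) (hf : Continuous (Function.uncurry f))
    {t : ℝ} {i : Fin N} (hyi : EqOn (fun s => y s i) 0 (Ioc 0 t)) :
    ∀ᵐ s, s ∈ Ioo 0 t → (∫ a, f (y s) a ∂β s) i = 0 := by
  filter_upwards [hy.ae_hasDerivAt (hβ.intervalIntegrable_integral_comp hf hy.2.1 0 t)]
    with s hs hst
  exact coord_eq_zero_of_hasDerivAt (hs hst) <|
    eventually_of_mem (Ioo_mem_nhds hst.1 hst.2) fun r hr => hyi (Ioo_subset_Ioc_self hr)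

theorem IsTrajectory.coord_eq_zero_of_runCost_eq_zero [MetricSpace A] [CompactSpace A]
    [BorelSpace A] {ℓ : EuclideanSpace ℝ (Fin N) → A → ℝ} (hy : IsTrajectory f β x y)
    (hβ : ∀ s, IsProbabilityMeasure (β s)) (hℓ : Continuous (Function.uncurry ℓ))
    {i : Fin N} {K C : ℝ} (hK : 0 < K) (hC : 0 < C) (hi : ∀ z a, K * |z i| ^ C ≤ ℓ z a)
    {t : ℝ} (hcost : runCost ℓ β y t = 0) : EqOn (fun s => y s i) 0 (Ioc 0 t) := by
  have hlow (s : ℝ) : K * |y s i| ^ C ≤ ∫ a, ℓ (y s) a ∂β s := by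
    simpa using integral_mono (integrable_const _)
      ((hℓ.comp (Continuous.prodMk_right (y s))).integrable_of_compactSpace (β s)) (hi (y s))
  have hcont : Continuous fun s => K * |y s i| ^ C := continuous_const.mul <|
    ((EuclideanSpace.proj (𝕜 := ℝ) i).continuous.comp hy.2.1).abs.rpow_const
      fun _ => Or.inr hC.le
  intro s hs
  simpa [hK.ne', Real.rpow_eq_zero (abs_nonneg _) hC.ne'] using
    eqOn_zero_of_runCost_eq_zero hcont (fun s => by positivity) hlow hcost hs

end Trajectory

theorem H5_from_data_general {N : ℕ} (hN : 0 < N) {A : Type*} [MetricSpace A] [CompactSpace A]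
    [MeasurableSpace A] [BorelSpace A]
    (T : Set (EuclideanSpace ℝ (Fin N))) (hTcl : IsClosed T)
    (f : EuclideanSpace ℝ (Fin N) → A → EuclideanSpace ℝ (Fin N))
    (hf : Continuous fun q : EuclideanSpace ℝ (Fin N) × A => f q.1 q.2)
    (ℓ : EuclideanSpace ℝ (Fin N) → A → ℝ)
    (hℓ : Continuous fun q : EuclideanSpace ℝ (Fin N) × A => ℓ q.1 q.2)
    (Y : EuclideanSpace ℝ (Fin N) → (ℝ → Measure A) → ℝ → EuclideanSpace ℝ (Fin N))
    (hY : ∀ x β, IsRelaxedControl β → IsTrajectory f β x (Y x β))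
    -- (i): `ℓ(x,a) ≥ K |x₁|^C`
    (K : ℝ) (hK : 0 < K) (C : ℝ) (hC : 0 < C)
    (hi : ∀ x a, K * |x ⟨0, hN⟩| ^ C ≤ ℓ x a)
    -- (ii): `0 ∉ {f₁^r((0,y), m) : m ∈ A^r}` whenever `(0,y) ∉ T`
    (hii : ∀ x : EuclideanSpace ℝ (Fin N), x ⟨0, hN⟩ = 0 → x ∉ T →
      ∀ m : Measure A, IsProbabilityMeasure m → (∫ a, (f x a) ⟨0, hN⟩ ∂m) ≠ 0) :
    -- (H₅): positive running cost outside the target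
    ∀ t > (0:ℝ), ∀ β, IsRelaxedControl β → ∀ x ∉ T, 0 < runCost ℓ β (Y x β) t := by
  intro t ht β hβ x hxT
  have hy := hY x β hβ
  rw [pos_iff_ne_zero]
  intro hcost
  have hy₁ := hy.coord_eq_zero_of_runCost_eq_zero hβ.1 hℓ hK hC hi hcost
  have hf₁ := hy.ae_integral_coord_eq_zero hβ hf hy₁
  obtain ⟨u, hu, hoff⟩ : ∃ u > 0, Ioo 0 u ⊆ {s | Y x β s ∉ T ∧ s < t} := by
    have hT : ∀ᶠ s in 𝓝 0, Y x β s ∉ T :=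
      hy.2.1.continuousAt.preimage_mem_nhds (hTcl.isOpen_compl.mem_nhds (by rwa [hy.1]))
    exact mem_nhdsGT_iff_exists_Ioo_subset.1 <|
      eventually_nhdsWithin_of_eventually_nhds (hT.and (gt_mem_nhds ht))
  have hf₁ne (s : ℝ) (hs : s ∈ Ioo 0 u) : (∫ a, f (Y x β s) a ∂β s) ⟨0, hN⟩ ≠ 0 := by
    have := hβ.1 s
    have hint : Integrable (f (Y x β s)) (β s) :=
      (hf.comp (Continuous.prodMk_right _)).integrable_of_compactSpace _
    rw [eval_integral_piLp hint.eval_piLp]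
    exact hii _ (hy₁ ⟨hs.1, (hoff hs).2.le⟩) (hoff hs).1 (β s) this
  have hnull : volume (Ioo 0 u) = 0 := measure_eq_zero_iff_ae_notMem.2 <| by
    filter_upwards [hf₁] with s hs hsu
    exact hf₁ne s hsu (hs ⟨hsu.1, (hoff hsu).2⟩)
  exact (not_le.2 hu) (by simpa using hnull)

/-- checkable sufficient conditions for `(H₅)`.  If (i) `ℓ(x,a) ≥ K|x₁|^C`
and (ii) the first relaxed dynamic `f₁^r` never vanishes on the hyperplane `{x₁ = 0}`
off the target, then the positivity hypothesis `(H₅)` holds. -/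
theorem H5_from_data {N : ℕ} (hN : 0 < N) {A : Type*} [MetricSpace A] [CompactSpace A]
    [Nonempty A] [MeasurableSpace A] [BorelSpace A]
    (T : Set (EuclideanSpace ℝ (Fin N))) (hTcl : IsClosed T) (hTne : T.Nonempty)
    (f : EuclideanSpace ℝ (Fin N) → A → EuclideanSpace ℝ (Fin N))
    (hf : Continuous fun q : EuclideanSpace ℝ (Fin N) × A => f q.1 q.2)
    (L : ℝ) (hL : 0 < L)
    (hfLip : ∀ x y a, ‖f x a - f y a‖ ≤ L * ‖x - y‖)
    (ℓ : EuclideanSpace ℝ (Fin N) → A → ℝ)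
    (hℓ : Continuous fun q : EuclideanSpace ℝ (Fin N) × A => ℓ q.1 q.2)
    (hℓnn : ∀ x a, 0 ≤ ℓ x a)
    (Y : EuclideanSpace ℝ (Fin N) → (ℝ → Measure A) → ℝ → EuclideanSpace ℝ (Fin N))
    (hY : ∀ x β, IsRelaxedControl β → IsTrajectory f β x (Y x β))
    -- (i): `ℓ(x,a) ≥ K |x₁|^C`
    (K : ℝ) (hK : 0 < K) (C : ℝ) (hC : 0 < C)
    (hi : ∀ x a, K * |x ⟨0, hN⟩| ^ C ≤ ℓ x a)
    -- (ii): `0 ∉ {f₁^r((0,y), m) : m ∈ A^r}` whenever `(0,y) ∉ T`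
    (hii : ∀ x : EuclideanSpace ℝ (Fin N), x ⟨0, hN⟩ = 0 → x ∉ T →
      ∀ m : Measure A, IsProbabilityMeasure m → (∫ a, (f x a) ⟨0, hN⟩ ∂m) ≠ 0) :
    -- (H₅): positive running cost outside the target
    ∀ t > (0:ℝ), ∀ β, IsRelaxedControl β → ∀ x ∉ T, 0 < runCost ℓ β (Y x β) t :=
  H5_from_data_general hN T hTcl f hf ℓ hℓ Y hY K hK C hC hi hii
end
end

section
/- Define I : ℝ² → (0,1] by I(x) := (1 + 4‖x‖²)^{−1/2}, and define u : ℝ² → ℝ by u(x) := 1 − ‖x‖² for ‖x‖ ≤ 1 and u(x) := 0 for ‖x‖ > 1. Then both u and −u are viscosity solutions of the shape-from-shading equation I(x)[1 + ‖Du(x)‖²]^{1/2} − 1 = 0 on the open unit ball B₁(0) ⊆ ℝ². In particular, when the light intensity I attains the value 1, the shape-from-shading equation can have more than one viscosity solution with the same boundary data. -/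
/-!
On the open unit ball `u = 1 - ‖x‖²` is smooth with `Du = -2x`, so `‖Du‖² = 4‖x‖²` and
`I(x) √(1 + ‖Du‖²) = 1` holds pointwise; the same is true of `-u`. A classical solution is a
viscosity solution, because at an interior extremum of `w - γ` a test function has `Dγ = Dw`.
-/

open Set Filter Topology Metric

noncomputable section

/-- Viscosity solution of `F(x, Dw(x)) = 0` on the open set `G`, via `C¹` test functions. -/
def IsViscositySol2 (F : EuclideanSpace ℝ (Fin 2) → EuclideanSpace ℝ (Fin 2) → ℝ)
    (G : Set (EuclideanSpace ℝ (Fin 2))) (w : EuclideanSpace ℝ (Fin 2) → ℝ) : Prop :=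
  (∀ γ : EuclideanSpace ℝ (Fin 2) → ℝ, ContDiffOn ℝ 1 γ G → ∀ x₀ ∈ G,
      IsLocalMinOn (fun x => w x - γ x) G x₀ → 0 ≤ F x₀ (gradient γ x₀)) ∧
  (∀ γ : EuclideanSpace ℝ (Fin 2) → ℝ, ContDiffOn ℝ 1 γ G → ∀ x₁ ∈ G,
      IsLocalMaxOn (fun x => w x - γ x) G x₁ → F x₁ (gradient γ x₁) ≤ 0)

/-- The light intensity `I(x) = (1 + 4‖x‖²)^{−1/2}`, which attains the value `1`. -/
def Ione (x : EuclideanSpace ℝ (Fin 2)) : ℝ := (Real.sqrt (1 + 4 * ‖x‖^2))⁻¹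

/-- The surface `u(x) = 1 − ‖x‖²` on the closed unit ball and `0` elsewhere. -/
def surf (x : EuclideanSpace ℝ (Fin 2)) : ℝ := if ‖x‖ ≤ 1 then 1 - ‖x‖^2 else 0

section Gradient

variable {E : Type*} [NormedAddCommGroup E] [InnerProductSpace ℝ E] [CompleteSpace E]

theorem hasGradientAt_one_sub_norm_sq (x : E) :
    HasGradientAt (fun y : E => 1 - ‖y‖ ^ 2) (-((2 : ℝ) • x)) x := by
  rw [hasGradientAt_iff_hasFDerivAt]
  refine ((hasFDerivAt_const (1 : ℝ) x).sub
    (hasStrictFDerivAt_norm_sq x).hasFDerivAt).congr_fderiv ?_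
  ext y
  simp

theorem IsLocalExtrOn.gradient_eq_of_hasGradientAt_sub {G : Set E} {w γ : E → ℝ} {x₀ g : E}
    (h : IsLocalExtrOn (fun x => w x - γ x) G x₀) (hG : G ∈ 𝓝 x₀)
    (hw : HasGradientAt w g x₀) (hγ : DifferentiableAt ℝ γ x₀) :
    gradient γ x₀ = g := by
  have hzero := (h.isLocalExtr hG).hasFDerivAt_eq_zero (hw.hasFDerivAt.sub hγ.hasFDerivAt)
  rw [gradient, ← sub_eq_zero.1 hzero, LinearIsometryEquiv.symm_apply_apply]

end Gradient

theorem isViscositySol2_of_hasGradientAt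
    {F : EuclideanSpace ℝ (Fin 2) → EuclideanSpace ℝ (Fin 2) → ℝ}
    {G : Set (EuclideanSpace ℝ (Fin 2))} (hG : IsOpen G) {w : EuclideanSpace ℝ (Fin 2) → ℝ}
    {Dw : EuclideanSpace ℝ (Fin 2) → EuclideanSpace ℝ (Fin 2)}
    (hw : ∀ x ∈ G, HasGradientAt w (Dw x) x) (hF : ∀ x ∈ G, F x (Dw x) = 0) :
    IsViscositySol2 F G w := by
  have hDγ : ∀ γ, ContDiffOn ℝ 1 γ G → ∀ x ∈ G,
      IsLocalExtrOn (fun x => w x - γ x) G x → gradient γ x = Dw x := fun γ hγ x hx h =>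
    h.gradient_eq_of_hasGradientAt_sub (hG.mem_nhds hx) (hw x hx)
      ((hγ.contDiffAt (hG.mem_nhds hx)).differentiableAt one_ne_zero)
  constructor
  · intro γ hγ x hx h
    rw [hDγ γ hγ x hx h.isExtr, hF x hx]
  · intro γ hγ x hx h
    rw [hDγ γ hγ x hx h.isExtr, hF x hx]

theorem hasGradientAt_surf {x : EuclideanSpace ℝ (Fin 2)} (hx : x ∈ ball 0 1) :
    HasGradientAt surf (-((2 : ℝ) • x)) x := by
  refine (hasGradientAt_one_sub_norm_sq x).congr_of_eventuallyEq ?_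
  filter_upwards [isOpen_ball.mem_nhds hx] with y hy
  simp [surf, (mem_ball_zero_iff.1 hy).le]

theorem hasGradientAt_neg_surf {x : EuclideanSpace ℝ (Fin 2)} (hx : x ∈ ball 0 1) :
    HasGradientAt (fun y => -surf y) ((2 : ℝ) • x) x := by
  rw [hasGradientAt_iff_hasFDerivAt]
  refine (hasGradientAt_iff_hasFDerivAt.1 (hasGradientAt_surf hx)).neg.congr_fderiv ?_
  simp

theorem Ione_mul_sqrt_one_add_norm_sq_two_smul (x : EuclideanSpace ℝ (Fin 2)) :
    Ione x * Real.sqrt (1 + ‖(2 : ℝ) • x‖ ^ 2) = 1 := by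
  have hnorm : ‖(2 : ℝ) • x‖ ^ 2 = 4 * ‖x‖ ^ 2 := by
    rw [norm_smul, mul_pow]; norm_num
  rw [Ione, hnorm, inv_mul_cancel₀ (Real.sqrt_pos.2 (by positivity)).ne']

/-- nonuniqueness for shape-from-shading when `I` attains the value `1`.
Both `u` and `−u` are viscosity solutions of `I(x)[1 + ‖Du‖²]^{1/2} − 1 = 0` on the open
unit ball. -/
theorem shape_from_shading_nonuniqueness :
    IsViscositySol2 (fun x p => Ione x * Real.sqrt (1 + ‖p‖^2) - 1)
      (ball (0 : EuclideanSpace ℝ (Fin 2)) 1) surf ∧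
    IsViscositySol2 (fun x p => Ione x * Real.sqrt (1 + ‖p‖^2) - 1)
      (ball (0 : EuclideanSpace ℝ (Fin 2)) 1) (fun x => -(surf x)) := by
  constructor
  · refine isViscositySol2_of_hasGradientAt isOpen_ball (fun x hx => hasGradientAt_surf hx)
      fun x _ => ?_
    rw [norm_neg, Ione_mul_sqrt_one_add_norm_sq_two_smul, sub_self]
  · refine isViscositySol2_of_hasGradientAt isOpen_ball (fun x hx => hasGradientAt_neg_surf hx)
      fun x _ => ?_
    rw [Ione_mul_sqrt_one_add_norm_sq_two_smul, sub_self]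
end
end
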